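/- Let {a_i mod n_i}_{i=1}^k be an exact covering system of ℤ with k ≥ 2 and moduli sorted increasingly. Then n_{k-p+1} = n_{k-p+2} = … = n_k, where p = p(n_k) is the smallest prime divisor of n_k; i.e., the largest modulus occurs at least p(n_k) times. -/

import Mathlib

/-!
Let `m` be the largest modulus, `p` its least prime factor and `ζ` a primitive `m`-th root of
unity. Summing `ζ ^ x` over a common period of the cover class by class, a class of modulus
`n < m` contributes `0` since `ζ ^ n ≠ 1`; hence `∑_{n_i = m} ζ ^ a_i = 0` for every primitive
`ζ`. Fix `j` with `n_j = m`, divide by `ζ ^ a_j` and sum over all primitive `ζ`: the term of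
index `i` becomes the Ramanujan sum `c_m(a_i - a_j)`. Now `c_m(0) = φ(m)`, and if `m ∤ c` then
some `q ^ e ∥ m` does not divide `c`, so `|c_{q^e}(c)| ≤ q ^ (e - 1) = φ(q ^ e) / (q - 1)` and, by
multiplicativity, `(p - 1) |c_m(c)| ≤ φ(m)`. Thus `φ(m) ≤ (s - 1) φ(m) / (p - 1)`, where `s` is
the number of moduli equal to `m`, i.e. `s ≥ p`.
-/

open Finset ArithmeticFunction Polynomial
open scoped ArithmeticFunction.Moebius Nat

namespace AddChar

variable {G R : Type*} [AddCommGroup G] [Fintype G] [CommSemiring R] (ψ : AddChar G R)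
  (K : AddSubgroup G) [DecidablePred (· ∈ K)]

lemma sum_sub_mem_eq_mul_sum_mem (g : G) :
    ∑ x with x - g ∈ K, ψ x = ψ g * ∑ y with y ∈ K, ψ y := by
  rw [mul_sum]
  refine sum_nbij' (· - g) (g + ·) ?_ ?_ ?_ ?_ ?_ <;> intro x hx
  · simpa using hx
  · simpa using hx
  · simp
  · simp
  · rw [← map_add_eq_mul, add_sub_cancel]

lemma sum_mem_eq_zero [IsDomain R] {k : G} (hk : k ∈ K) (hψk : ψ k ≠ 1) :
    ∑ y with y ∈ K, ψ y = 0 := by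
  refine eq_zero_of_mul_eq_self_left hψk ?_
  rw [← sum_sub_mem_eq_mul_sum_mem]
  congr! 2 with y
  rw [sub_eq_add_neg, K.add_mem_cancel_right (K.neg_mem hk)]

end AddChar

lemma ZMod.intCast_sub_mem_zmultiples_iff {N d : ℕ} (h : d ∣ N) (x a : ℤ) :
    (x : ZMod N) - a ∈ AddSubgroup.zmultiples (d : ZMod N) ↔ (d : ℤ) ∣ x - a := by
  rw [AddSubgroup.mem_zmultiples_iff]
  constructor
  · rintro ⟨k, hk⟩
    have : ((k * d - (x - a) : ℤ) : ZMod N) = 0 := by push_cast; rw [← hk]; simp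
    rw [ZMod.intCast_zmod_eq_zero_iff_dvd] at this
    exact (dvd_sub_right (dvd_mul_left _ _)).1 ((Int.natCast_dvd_natCast.2 h).trans this)
  · rintro ⟨k, hk⟩
    exact ⟨k, by push_cast [← Int.cast_sub, hk, zsmul_eq_mul]; ring⟩

def IsExactCover {ι : Type*} (a : ι → ℤ) (n : ι → ℕ) : Prop :=
  ∀ x : ℤ, ∃! i, (n i : ℤ) ∣ x - a i

open Classical in
lemma IsExactCover.sum_sum_sub_mem_zmultiples_eq_sum {ι M : Type*} [Fintype ι]
    [AddCommMonoid M] {a : ι → ℤ} {n : ι → ℕ} (hcover : IsExactCover a n) {N : ℕ} [NeZero N]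
    (hdvd : ∀ i, n i ∣ N) (f : ZMod N → M) :
    ∑ i, ∑ x : ZMod N with x - (a i : ZMod N) ∈ AddSubgroup.zmultiples (n i : ZMod N), f x =
      ∑ x, f x := by
  simp only [sum_filter]
  rw [sum_comm]
  refine sum_congr rfl fun x _ => ?_
  obtain ⟨i, hi, huniq⟩ := hcover x.val
  have hmem : ∀ j, x - (a j : ZMod N) ∈ AddSubgroup.zmultiples (n j : ZMod N) ↔
      (n j : ℤ) ∣ x.val - a j := fun j => by
    rw [← ZMod.intCast_sub_mem_zmultiples_iff (hdvd j)]
    simp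
  rw [Fintype.sum_eq_single i fun j hj => if_neg (mt (hmem j).1 (mt (huniq j) hj)),
    if_pos ((hmem i).2 hi)]

theorem IsExactCover.sum_zpow_eq_zero {ι : Type*} [Fintype ι] {a : ι → ℤ} {n : ι → ℕ}
    (hcover : IsExactCover a n) (hn : ∀ i, n i ≠ 0) {m : ℕ} (hm : 1 < m) (hle : ∀ i, n i ≤ m)
    {ζ : ℂ} (hζ : IsPrimitiveRoot ζ m) :
    ∑ i with n i = m, ζ ^ a i = 0 := by
  classical
  set N := m * ∏ i, n i
  have : NeZero N := ⟨mul_ne_zero (by omega) (prod_ne_zero_iff.2 fun i _ => hn i)⟩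
  have hdvd : ∀ i, n i ∣ N := fun i => dvd_mul_of_dvd_right (dvd_prod_of_mem n (mem_univ i)) m
  set ψ := AddChar.zmodChar N (show ζ ^ N = 1 by rw [pow_mul, hζ.pow_eq_one, one_pow])
  have hψ : ∀ a : ℤ, ψ a = ζ ^ a := fun a => by
    rw [← zsmul_one, AddChar.map_zsmul_eq_zpow, ← Nat.cast_one, AddChar.zmodChar_apply', pow_one]
  set K : ℕ → AddSubgroup (ZMod N) := fun d => AddSubgroup.zmultiples (d : ZMod N)
  -- In `ZMod N` the classes of the cover are cosets of the `K (n i)`, and the sum of `ψ` over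
  -- `K d` vanishes unless `ζ ^ d = 1`, that is, unless `d = m`.
  have hsum : ∑ i, ζ ^ a i * ∑ y with y ∈ K (n i), ψ y = 0 := by
    simp_rw [← hψ, ← AddChar.sum_sub_mem_eq_mul_sum_mem]
    rw [hcover.sum_sum_sub_mem_zmultiples_eq_sum hdvd]
    have h1 := hψ 1
    rw [Int.cast_one, zpow_one] at h1
    exact (AddChar.sum_eq_zero_iff_ne_zero (ψ := ψ)).2
      (AddChar.ne_zero_iff.2 ⟨1, h1 ▸ hζ.ne_one hm⟩)
  have hK : ∀ i, n i ≠ m → ∑ y with y ∈ K (n i), ψ y = 0 := fun i hi =>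
    ψ.sum_mem_eq_zero _ (AddSubgroup.mem_zmultiples _) (by
      rw [AddChar.zmodChar_apply']
      exact hζ.pow_ne_one_of_pos_of_lt (hn i) (lt_of_le_of_ne (hle i) hi))
  have hKm : ∑ y with y ∈ K m, ψ y ≠ 0 := by
    rw [sum_congr rfl fun y hy => ?_, sum_const, nsmul_one]
    · exact Nat.cast_ne_zero.2 (card_ne_zero.2 ⟨0, by simp⟩)
    · obtain ⟨k, rfl⟩ := AddSubgroup.mem_zmultiples_iff.1 (mem_filter.1 hy).2
      rw [AddChar.map_zsmul_eq_zpow, AddChar.zmodChar_apply', hζ.pow_eq_one, one_zpow]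
  have hsplit : ∑ i, ζ ^ a i * ∑ y with y ∈ K (n i), ψ y
      = (∑ i with n i = m, ζ ^ a i) * ∑ y with y ∈ K m, ψ y := by
    rw [sum_mul, sum_filter]
    refine sum_congr rfl fun i _ => ?_
    split_ifs with h
    · rw [h]
    · simp [hK i h]
  rw [hsplit] at hsum
  exact (mul_eq_zero.1 hsum).resolve_right hKm

lemma Nat.exists_prime_pow_mul_coprime_not_dvd {n c : ℕ} (hn : n ≠ 0) (h : ¬ n ∣ c) :
    ∃ q e r, q.Prime ∧ q ^ (e + 1) * r = n ∧ (q ^ (e + 1)).Coprime r ∧ ¬ q ^ (e + 1) ∣ c := by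
  obtain ⟨q, k, hq, hkn, hkc⟩ : ∃ q k, q.Prime ∧ q ^ k ∣ n ∧ ¬ q ^ k ∣ c := by
    simpa using mt (Nat.dvd_iff_prime_pow_dvd_dvd c n).2 h
  have hk : k ≤ n.factorization q := (hq.pow_dvd_iff_le_factorization hn).1 hkn
  obtain ⟨e, he⟩ : ∃ e, n.factorization q = e + 1 :=
    Nat.exists_eq_add_one.2 (lt_of_lt_of_le (Nat.pos_of_ne_zero (by rintro rfl; simp at hkc)) hk)
  refine ⟨q, e, ordCompl[q] n, hq, he ▸ Nat.ordProj_mul_ordCompl_eq_self n q,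
    he ▸ (Nat.coprime_ordCompl hq hn).pow_left _, fun hc => hkc ((pow_dvd_pow q ?_).trans hc)⟩
  omega

namespace ArithmeticFunction

def idOnDivisors (c : ℤ) : ArithmeticFunction ℤ :=
  ⟨fun d => if (d : ℤ) ∣ c then d else 0, by simp⟩

lemma idOnDivisors_apply (c : ℤ) (d : ℕ) :
    idOnDivisors c d = if (d : ℤ) ∣ c then (d : ℤ) else 0 := rfl

lemma isMultiplicative_idOnDivisors (c : ℤ) : (idOnDivisors c).IsMultiplicative := by
  refine ⟨by simp [idOnDivisors_apply], fun {d e} hde => ?_⟩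
  have hdvd : ((d * e : ℕ) : ℤ) ∣ c ↔ (d : ℤ) ∣ c ∧ (e : ℤ) ∣ c := by
    push_cast
    exact ⟨fun h => ⟨dvd_of_mul_right_dvd h, dvd_of_mul_left_dvd h⟩,
      fun h => (Nat.isCoprime_iff_coprime.2 hde).mul_dvd h.1 h.2⟩
  simp only [idOnDivisors_apply, hdvd]
  split_ifs <;> simp_all

/-- The Ramanujan sum `c_n(c) = ∑_{d ∣ gcd(n, c)} μ(n / d) d`. -/
def ramanujanSum (c : ℤ) : ArithmeticFunction ℤ := μ * idOnDivisors c

lemma isMultiplicative_ramanujanSum (c : ℤ) : (ramanujanSum c).IsMultiplicative :=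
  isMultiplicative_moebius.mul (isMultiplicative_idOnDivisors c)

lemma sum_divisors_ramanujanSum (c : ℤ) (n : ℕ) :
    ∑ d ∈ n.divisors, ramanujanSum c d = idOnDivisors c n := by
  rw [← coe_zeta_mul_apply, ramanujanSum, ← mul_assoc, coe_zeta_mul_moebius, one_mul]

lemma sum_nthRootsFinset_zpow {n : ℕ} (hn : 0 < n) (c : ℤ) :
    ∑ w ∈ nthRootsFinset n (1 : ℂ), w ^ c = idOnDivisors c n := by
  obtain ⟨ζ, hζ⟩ : ∃ ζ : ℂ, IsPrimitiveRoot ζ n := ⟨_, Complex.isPrimitiveRoot_exp n hn.ne'⟩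
  rw [idOnDivisors_apply]
  split_ifs with hc
  · obtain ⟨t, rfl⟩ := hc
    rw [sum_congr rfl fun w hw => by
      rw [zpow_mul, zpow_natCast, (mem_nthRootsFinset hn 1).1 hw, one_zpow], sum_const,
      hζ.card_nthRootsFinset, nsmul_one]
    push_cast
    rfl
  · rw [Int.cast_zero]
    refine eq_zero_of_mul_eq_self_left (mt (hζ.zpow_eq_one_iff_dvd c).1 hc) ?_
    rw [mul_sum]
    refine sum_nbij' (ζ * ·) (ζ⁻¹ * ·) ?_ ?_ ?_ ?_ ?_ <;> intro w hw
    · simp_all [mem_nthRootsFinset hn, mul_pow, hζ.pow_eq_one]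
    · simp_all [mem_nthRootsFinset hn, mul_pow, inv_pow, hζ.pow_eq_one]
    · simp [hζ.ne_zero hn.ne']
    · simp [hζ.ne_zero hn.ne']
    · simp [mul_zpow]

/-- Möbius inversion of the partition of the `n`-th roots of unity according to their order. -/
lemma sum_primitiveRoots_zpow {n : ℕ} (hn : 0 < n) (c : ℤ) :
    ∑ w ∈ primitiveRoots n ℂ, w ^ c = ramanujanSum c n := by
  have hdiv : ∀ d > 0, ∑ e ∈ d.divisors, ∑ w ∈ primitiveRoots e ℂ, w ^ c
      = (idOnDivisors c d : ℂ) := fun d hd => by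
    rw [← sum_nthRootsFinset_zpow hd, IsPrimitiveRoot.nthRoots_one_eq_biUnion_primitiveRoots,
      sum_biUnion fun i _ j _ hij => IsPrimitiveRoot.disjoint hij]
  rw [← sum_eq_iff_sum_mul_moebius_eq.1 hdiv n hn, ramanujanSum, mul_apply]
  push_cast
  rfl

lemma abs_ramanujanSum_le (c : ℤ) (n : ℕ) : |ramanujanSum c n| ≤ φ n := by
  rcases Nat.eq_zero_or_pos n with rfl | hn
  · simp
  have h := norm_sum_le (primitiveRoots n ℂ) (· ^ c)
  rw [sum_primitiveRoots_zpow hn] at h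
  have hnorm : ∀ w ∈ primitiveRoots n ℂ, ‖w ^ c‖ = 1 := fun w hw =>
    by rw [norm_zpow, ((mem_primitiveRoots hn).1 hw).norm'_eq_one hn.ne', one_zpow]
  rw [sum_congr rfl hnorm, sum_const, Complex.card_primitiveRoots, nsmul_one,
    Complex.norm_intCast] at h
  exact_mod_cast h

lemma ramanujanSum_of_dvd {c : ℤ} {n : ℕ} (h : (n : ℤ) ∣ c) : ramanujanSum c n = φ n := by
  rcases Nat.eq_zero_or_pos n with rfl | hn
  · simp
  obtain ⟨t, rfl⟩ := h
  have hone : ∀ w ∈ primitiveRoots n ℂ, w ^ ((n : ℤ) * t) = 1 := fun w hw => by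
    rw [zpow_mul, zpow_natCast, ((mem_primitiveRoots hn).1 hw).pow_eq_one, one_zpow]
  have h := sum_primitiveRoots_zpow hn (n * t)
  rw [sum_congr rfl hone, sum_const, Complex.card_primitiveRoots, nsmul_one] at h
  exact_mod_cast h.symm

lemma abs_ramanujanSum_prime_pow_le {c : ℤ} {q e : ℕ} (hq : q.Prime)
    (h : ¬ ((q ^ (e + 1) : ℕ) : ℤ) ∣ c) : |ramanujanSum c (q ^ (e + 1))| ≤ q ^ e := by
  have hsucc := sum_divisors_ramanujanSum c (q ^ (e + 1))
  rw [Nat.sum_divisors_prime_pow hq, sum_range_succ, ← Nat.sum_divisors_prime_pow hq,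
    sum_divisors_ramanujanSum, idOnDivisors_apply (d := q ^ (e + 1)), if_neg h] at hsucc
  rw [eq_neg_of_add_eq_zero_right hsucc, abs_neg, idOnDivisors_apply]
  split_ifs <;> simp

lemma minFac_sub_one_mul_abs_ramanujanSum_le {c : ℤ} {n : ℕ} (hn : n ≠ 0)
    (h : ¬ (n : ℤ) ∣ c) : ((n.minFac : ℤ) - 1) * |ramanujanSum c n| ≤ φ n := by
  rw [Int.natCast_dvd] at h
  obtain ⟨q, e, r, hq, rfl, hcop, hqc⟩ := Nat.exists_prime_pow_mul_coprime_not_dvd hn h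
  have hmin : (q ^ (e + 1) * r).minFac ≤ q :=
    Nat.minFac_le_of_dvd hq.two_le (dvd_mul_of_dvd_left (dvd_pow_self q e.succ_ne_zero) r)
  have hq_pow := abs_ramanujanSum_prime_pow_le (c := c) hq (by rwa [Int.natCast_dvd])
  have hr := abs_ramanujanSum_le c r
  rw [(isMultiplicative_ramanujanSum c).map_mul_of_coprime hcop, abs_mul, Nat.totient_mul hcop,
    Nat.totient_prime_pow_succ hq]
  push_cast [Nat.cast_sub hq.one_le]
  calc ((q ^ (e + 1) * r).minFac - 1 : ℤ) * (|ramanujanSum c (q ^ (e + 1))| * |ramanujanSum c r|)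
      ≤ (q - 1) * (q ^ e * φ r) := by
        have hq1 : (1 : ℤ) ≤ q := by exact_mod_cast hq.one_le
        exact mul_le_mul (sub_le_sub_right (by exact_mod_cast hmin) 1)
          (mul_le_mul hq_pow hr (abs_nonneg _) (by positivity)) (by positivity) (by linarith)
    _ = q ^ e * (q - 1) * φ r := by ring

end ArithmeticFunction

theorem minFac_le_card_of_sum_zpow_eq_zero {ι : Type*} {n : ℕ} (hn : 0 < n) {s : Finset ι}
    (hs : s.Nonempty) (b : ι → ℤ) (h : ∀ ζ : ℂ, IsPrimitiveRoot ζ n → ∑ i ∈ s, ζ ^ b i = 0) :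
    n.minFac ≤ s.card := by
  classical
  obtain ⟨i₀, hi₀⟩ := hs
  set R : ℤ → ℤ := fun c => ramanujanSum c n
  have hsum : ∑ i ∈ s, R (b i - b i₀) = 0 := by
    have : (∑ i ∈ s, R (b i - b i₀) : ℂ) = 0 := by
      push_cast [R, ← sum_primitiveRoots_zpow hn]
      rw [sum_comm]
      refine sum_eq_zero fun w hw => ?_
      have hw := (mem_primitiveRoots hn).1 hw
      simp_rw [zpow_sub₀ (hw.ne_zero hn.ne'), div_eq_mul_inv, ← sum_mul, h w hw, zero_mul]
    exact_mod_cast this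
  have hp : (0 : ℤ) ≤ n.minFac - 1 := by
    have := Nat.minFac_pos n
    omega
  have hlow : ∀ c, -(φ n : ℤ) ≤ (n.minFac - 1) * R c := fun c => by
    by_cases hc : (n : ℤ) ∣ c
    · simp only [R, ramanujanSum_of_dvd hc]
      nlinarith [(φ n).cast_nonneg (α := ℤ)]
    · have := minFac_sub_one_mul_abs_ramanujanSum_le hn.ne' hc
      nlinarith [neg_abs_le (R c)]
  have hφ : 0 < (φ n : ℤ) := by exact_mod_cast Nat.totient_pos.2 hn
  rw [← add_sum_erase s _ hi₀, sub_self, show R 0 = φ n from ramanujanSum_of_dvd (dvd_zero _)]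
    at hsum
  have hrest : -((s.card - 1 : ℕ) * φ n : ℤ)
      ≤ (n.minFac - 1) * ∑ i ∈ s.erase i₀, R (b i - b i₀) := by
    rw [mul_sum, ← card_erase_of_mem hi₀, ← nsmul_eq_mul, ← sum_const, ← sum_neg_distrib]
    exact sum_le_sum fun i _ => hlow _
  have hcard : 1 ≤ s.card := card_pos.2 ⟨i₀, hi₀⟩
  push_cast [hcard] at hrest
  have : ((n.minFac : ℤ) - 1) * φ n ≤ (s.card - 1) * φ n := by
    linear_combination hrest + ((n.minFac : ℤ) - 1) * hsum
  have := le_of_mul_le_mul_right this hφ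
  omega

/-- Newman's theorem: in an exact covering system of `ℤ` with moduli sorted
increasingly, the largest modulus occurs at least `p(n_k)` times, where
`p(n_k)` is the least prime factor of the largest modulus. -/
theorem exact_cover_largest_modulus_repeated_minFac {k : ℕ} (hk : 2 ≤ k)
    (a : Fin k → ℤ) (n : Fin k → ℕ) (hn : ∀ i, 2 ≤ n i)
    (hmono : Monotone n)
    (hcover : ∀ x : ℤ, ∃! i : Fin k, (n i : ℤ) ∣ x - a i) :
    ∀ i : Fin k, k - (n ⟨k - 1, by omega⟩).minFac ≤ (i : ℕ) →
      n i = n ⟨k - 1, by omega⟩ := by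
  intro i hi
  set m := n ⟨k - 1, by omega⟩
  have hm : 1 < m := hn _
  have hle : ∀ j, n j ≤ m := fun j => hmono (Fin.le_def.2 (Nat.le_sub_one_of_lt j.2))
  have hcard : m.minFac ≤ #{j | n j = m} :=
    minFac_le_card_of_sum_zpow_eq_zero (by omega) ⟨_, mem_filter.2 ⟨mem_univ _, rfl⟩⟩ a
      fun ζ hζ => IsExactCover.sum_zpow_eq_zero hcover (fun j => by have := hn j; omega) hm hle hζ
  by_contra hne
  have hsub : ({j | n j = m} : Finset (Fin k)) ⊆ Ioi i := fun j hj => by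
    rw [mem_filter] at hj
    exact mem_Ioi.2 (lt_of_not_ge fun hji => hne (le_antisymm (hle i) (hj.2 ▸ hmono hji)))
  have := (card_le_card hsub).trans_eq (Fin.card_Ioi i)
  omega
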